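/- arXiv:1905.08117 — 5 statements merged into one kernel-verified Lean document; each statement's English description precedes it below -/
import Mathlib

section
/- A zero-dimensional Bézout ring is a strict Bézout ring. -/
/-!
Let `d` generate `(b₁, b₂)`, so `bᵢ = d aᵢ` and `d = u b₁ + v b₂`; thus `d e = d` for
`e = u a₁ + v a₂`, but `a₁, a₂` need not be comaximal. Zero-dimensionality turns a power of `e x`
into an idempotent `f ∈ (a₁, a₂)` with `d f = d`. In `R ≅ R f × R (1 - f)` keep `(a₁, a₂)` on the
first factor, where they are comaximal, and use `(1, 0)` on the second, which `d` kills: the pair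
`(f a₁ + 1 - f, f a₂)` is comaximal and has the same multiples by `d`.
-/

section

variable {R : Type*} [CommRing R]

theorem mul_pow_eq_self_of_mul_eq_self {d e : R} (h : d * e = d) (n : ℕ) : d * e ^ n = d := by
  induction n with
  | zero => simp
  | succ n ih => rw [pow_succ, ← mul_assoc, ih, h]

theorem pow_mul_mul_pow_eq_pow {a x : R} {k : ℕ} (h : a ^ k * (a * x - 1) = 0) (j : ℕ) :
    a ^ k * (a * x) ^ j = a ^ k :=
  mul_pow_eq_self_of_mul_eq_self (by linear_combination h) j

theorem isIdempotentElem_mul_pow_succ {a x : R} {k : ℕ} (h : a ^ k * (a * x - 1) = 0) :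
    IsIdempotentElem ((a * x) ^ (k + 1)) := by
  unfold IsIdempotentElem
  linear_combination (a * x ^ (k + 1)) * pow_mul_mul_pow_eq_pow h (k + 1)

theorem IsIdempotentElem.isCoprime_of_mem_span_pair {f a₁ a₂ : R} (hf : IsIdempotentElem f)
    (hmem : f ∈ Ideal.span {a₁, a₂}) : IsCoprime (f * a₁ + (1 - f)) (f * a₂) := by
  obtain ⟨u, v, huv⟩ := Ideal.mem_span_pair.mp hmem
  refine ⟨f * u + (1 - f), f * v, ?_⟩
  linear_combination (f + 2 - u - a₁) * hf.eq + (f * f) * huv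

theorem exists_isCoprime_of_mul_eq_self {d a₁ a₂ u v x : R} {k : ℕ}
    (hd : d * (u * a₁ + v * a₂) = d)
    (hk : (u * a₁ + v * a₂) ^ k * ((u * a₁ + v * a₂) * x - 1) = 0) :
    ∃ a₁' a₂' : R, d * a₁' = d * a₁ ∧ d * a₂' = d * a₂ ∧ IsCoprime a₁' a₂' := by
  set e := u * a₁ + v * a₂
  set f := (e * x) ^ (k + 1)
  have he : e ∈ Ideal.span {a₁, a₂} := Ideal.mem_span_pair.mpr ⟨u, v, rfl⟩
  have hf : f ∈ Ideal.span {a₁, a₂} :=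
    Ideal.pow_mem_of_mem _ (Ideal.mul_mem_right x _ he) _ k.succ_pos
  have hdf : d * f = d := by
    calc d * f = d * e ^ k * f := by rw [mul_pow_eq_self_of_mul_eq_self hd]
      _ = d * (e ^ k * f) := mul_assoc _ _ _
      _ = d := by rw [pow_mul_mul_pow_eq_pow hk, mul_pow_eq_self_of_mul_eq_self hd]
  refine ⟨f * a₁ + (1 - f), f * a₂, ?_, ?_,
    (isIdempotentElem_mul_pow_succ hk).isCoprime_of_mem_span_pair hf⟩
  · linear_combination (a₁ - 1) * hdf
  · linear_combination a₂ * hdf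

end

/-- A zero-dimensional Bézout ring is a strict Bézout ring. -/
theorem zero_dim_bezout_is_strict (R : Type*) [CommRing R]
    (hdim : ∀ a : R, ∃ (k : ℕ) (x : R), a ^ k * (a * x - 1) = 0)
    (hbez : ∀ I : Ideal R, I.FG → I.IsPrincipal) :
    ∀ b₁ b₂ : R, ∃ d b₁' b₂' c₁ c₂ : R,
      b₁ = d * b₁' ∧ b₂ = d * b₂' ∧ c₁ * b₁' + c₂ * b₂' = 1 := by
  intro b₁ b₂
  have : IsBezout R := ⟨hbez⟩
  set d := IsBezout.gcd b₁ b₂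
  obtain ⟨a₁, hb₁⟩ := IsBezout.gcd_dvd_left b₁ b₂
  obtain ⟨a₂, hb₂⟩ := IsBezout.gcd_dvd_right b₁ b₂
  obtain ⟨u, v, huv⟩ := IsBezout.gcd_eq_sum b₁ b₂
  have hd : d * (u * a₁ + v * a₂) = d := by linear_combination huv - u * hb₁ - v * hb₂
  obtain ⟨k, x, hk⟩ := hdim (u * a₁ + v * a₂)
  obtain ⟨a₁', a₂', h₁, h₂, c₁, c₂, hc⟩ := exists_isCoprime_of_mul_eq_self hd hk
  exact ⟨d, a₁', a₂', c₁, c₂, hb₁.trans h₁.symm, hb₂.trans h₂.symm, hc⟩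
end

section
/- A valuation domain of Krull dimension at most 1 is archimedean: for all nonzero a, b in the Jacobson radical, there exists k ∈ ℕ with b dividing a^k. -/
/-! Apply the dimension condition to `a` and `b` and cancel the nonzero factor `b ^ ℓ`:
`a ^ k * (a * x - 1)` becomes a multiple of `b`. As `a` lies in the Jacobson radical,
`a * x - 1` is a unit, so already `b ∣ a ^ k`. -/

theorem Ideal.isUnit_mul_sub_one_of_mem_jacobson_bot {R : Type*} [CommRing R] {a : R}
    (ha : a ∈ jacobson (⊥ : Ideal R)) (x : R) : IsUnit (a * x - 1) := by
  have h : IsUnit (1 - a * x) :=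
    isUnit_of_sub_one_mem_jacobson_bot _ (by simpa using neg_mem (mul_mem_right x _ ha))
  simpa using h.neg

theorem Ideal.dvd_pow_of_mem_jacobson_bot_of_pow_mul_add_mul_eq_zero {R : Type*} [CommRing R]
    {a b x y : R} {k : ℕ} (ha : a ∈ jacobson (⊥ : Ideal R))
    (h : a ^ k * (a * x - 1) + b * y = 0) : b ∣ a ^ k :=
  (isUnit_mul_sub_one_of_mem_jacobson_bot ha x).dvd_mul_right.1
    ⟨-y, by linear_combination h⟩

theorem valuation_domain_dim_le_one_archimedean_general (V : Type*) [CommRing V] [IsDomain V]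
    (hdim : ∀ a b : V, ∃ (k l : ℕ) (x y : V), b ^ l * (a ^ k * (a * x - 1) + b * y) = 0) :
    ∀ a b : V, a ∈ Ideal.jacobson (⊥ : Ideal V) → b ∈ Ideal.jacobson (⊥ : Ideal V) →
      a ≠ 0 → b ≠ 0 → ∃ k : ℕ, b ∣ a ^ k := by
  intro a b ha _ _ hb
  obtain ⟨k, l, x, y, h⟩ := hdim a b
  have hcancel : a ^ k * (a * x - 1) + b * y = 0 :=
    (mul_eq_zero.1 h).resolve_left (pow_ne_zero l hb)
  exact ⟨k, Ideal.dvd_pow_of_mem_jacobson_bot_of_pow_mul_add_mul_eq_zero ha hcancel⟩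

/-- A valuation domain of Krull dimension at most 1 is archimedean: for all nonzero
`a`, `b` in the Jacobson radical there is `k` with `b ∣ a ^ k`. -/
theorem valuation_domain_dim_le_one_archimedean (V : Type*) [CommRing V] [IsDomain V]
    (hval : ∀ a b : V, a ∣ b ∨ b ∣ a)
    (hdim : ∀ a b : V, ∃ (k l : ℕ) (x y : V), b ^ l * (a ^ k * (a * x - 1) + b * y) = 0) :
    ∀ a b : V, a ∈ Ideal.jacobson (⊥ : Ideal V) → b ∈ Ideal.jacobson (⊥ : Ideal V) →
      a ≠ 0 → b ≠ 0 → ∃ k : ℕ, b ∣ a ^ k :=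
  valuation_domain_dim_le_one_archimedean_general V hdim
end

section
/- Let V be a valuation domain. If for all nonzero a, b in the Jacobson radical there exists k with a ∣ b^k, and invertibility is decidable (the residual field is discrete), then V has Krull dimension at most 1. -/
/-- The Coquand–Lombardi condition at `a, b` whose validity for all pairs
characterizes Krull dimension at most 1. -/
def KrullDimLeOneAt {R : Type*} [CommRing R] (a b : R) : Prop :=
  ∃ (k l : ℕ) (x y : R), b ^ l * (a ^ k * (a * x - 1) + b * y) = 0

namespace KrullDimLeOneAt

variable {R : Type*} [CommRing R] {a b : R}

theorem of_isUnit_left (ha : IsUnit a) : KrullDimLeOneAt a b := by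
  obtain ⟨x, hx⟩ := ha.exists_right_inv
  exact ⟨0, 0, x, 0, by simp [hx]⟩

theorem of_right_eq_zero (hb : b = 0) : KrullDimLeOneAt a b :=
  ⟨0, 1, 0, 0, by simp [hb]⟩

theorem of_dvd_pow {k : ℕ} (h : b ∣ a ^ k) : KrullDimLeOneAt a b := by
  obtain ⟨c, hc⟩ := h
  exact ⟨k, 0, 0, c, by simp [hc]⟩

end KrullDimLeOneAt

theorem archimedean_valuation_domain_dim_le_one_general (V : Type*) [CommRing V]
    (harch : ∀ a b : V, a ∈ Ideal.jacobson (⊥ : Ideal V) → b ∈ Ideal.jacobson (⊥ : Ideal V) →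
      a ≠ 0 → b ≠ 0 → ∃ k : ℕ, a ∣ b ^ k)
    (hres : ∀ x : V, IsUnit x ∨ x ∈ Ideal.jacobson (⊥ : Ideal V)) :
    ∀ a b : V, ∃ (k l : ℕ) (x y : V), b ^ l * (a ^ k * (a * x - 1) + b * y) = 0 := by
  intro a b
  show KrullDimLeOneAt a b
  rcases hres a with ha_unit | ha_rad
  · exact .of_isUnit_left ha_unit
  rcases eq_or_ne b 0 with hb0 | hb0
  · exact .of_right_eq_zero hb0
  rcases hres b with hb_unit | hb_rad
  · exact .of_dvd_pow (k := 0) hb_unit.dvd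
  rcases eq_or_ne a 0 with rfl | ha0
  · exact .of_dvd_pow (k := 1) (by simp)
  obtain ⟨k, hk⟩ := harch b a hb_rad ha_rad hb0 ha0
  exact .of_dvd_pow hk

/-- An archimedean valuation domain with discrete residual field has Krull dimension
at most 1. -/
theorem archimedean_valuation_domain_dim_le_one (V : Type*) [CommRing V] [IsDomain V]
    (hval : ∀ a b : V, a ∣ b ∨ b ∣ a)
    (harch : ∀ a b : V, a ∈ Ideal.jacobson (⊥ : Ideal V) → b ∈ Ideal.jacobson (⊥ : Ideal V) →
      a ≠ 0 → b ≠ 0 → ∃ k : ℕ, a ∣ b ^ k)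
    (hres : ∀ x : V, IsUnit x ∨ x ∈ Ideal.jacobson (⊥ : Ideal V)) :
    ∀ a b : V, ∃ (k l : ℕ) (x y : V), b ^ l * (a ^ k * (a * x - 1) + b * y) = 0 :=
  archimedean_valuation_domain_dim_le_one_general V harch hres
end

section
/- In a coherent valuation ring, let c, d be nonzero elements with d dividing c, say c = d·y, and suppose the colon ideal (c : d) is principal, generated by u. Then (c : d) = ⟨y⟩. -/
/-- In a (coherent) valuation ring, if `c = d * y ≠ 0` and the colon ideal `(⟨c⟩ : ⟨d⟩)`
is principal, generated by `u`, then `(⟨c⟩ : ⟨d⟩) = ⟨y⟩`, i.e. `⟨u⟩ = ⟨y⟩`. -/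
theorem valuation_colon_principal (V : Type*) [CommRing V]
    (hval : ∀ a b : V, a ∣ b ∨ b ∣ a)
    (hloc : ∀ x : V, IsUnit x ∨ IsUnit (1 + x))
    (c d y u : V) (hc : c ≠ 0) (hcd : c = d * y)
    (hu : (Ideal.span {c}).colon (Ideal.span {d}) = Ideal.span {u}) :
    (Ideal.span {c}).colon (Ideal.span {d}) = Ideal.span {y} := by
  ext x
  rw [Ideal.mem_colon_span_singleton, Ideal.mem_span_singleton, Ideal.mem_span_singleton]
  constructor
  · intro h
    obtain ⟨t, ht⟩ := h
    rcases hval y x with hyx | hxy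
    · exact hyx
    · obtain ⟨s, hs⟩ := hxy
      rcases hloc (-(s * t)) with hst | h1
      · have hsu : IsUnit s := isUnit_of_dvd_unit ⟨-t, by ring⟩ hst
        obtain ⟨v, hv⟩ := hsu
        exact ⟨↑v⁻¹, by rw [hs, mul_assoc, ← hv, Units.mul_inv, mul_one]⟩
      · exfalso
        apply hc
        have hz : x * d * (1 + -(s * t)) = 0 := by
          linear_combination ht + t * hcd + d * t * hs
        have hxd : x * d = 0 := by
          obtain ⟨w, hw⟩ := h1
          calc x * d = x * d * (1 + -(s * t)) * ↑w⁻¹ := by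
                rw [← hw, Units.mul_inv_cancel_right]
            _ = 0 := by rw [hz, zero_mul]
        rw [hcd, hs]
        calc d * (x * s) = (x * d) * s := by ring
          _ = 0 := by rw [hxd, zero_mul]
  · rintro ⟨r, rfl⟩
    exact ⟨r, by rw [hcd]; ring⟩
end

section
/- Let V be a valuation ring (local, any two elements divisibility-comparable) and let a, b be nonzero elements of the Jacobson radical. If there exists k such that the colon ideals satisfy (⟨b⟩ : a^k) = (⟨b⟩ : a^{k+1}) and each of these is principal, then b divides a^k or b divides a^{k+1}. -/
/-- In a valuation ring, for nonzero `a`, `b` in the Jacobson radical, if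
`(⟨b⟩ : ⟨a ^ k⟩) = (⟨b⟩ : ⟨a ^ (k+1)⟩)` with both colon ideals principal,
then `b ∣ a ^ k` or `b ∣ a ^ (k + 1)`. -/
theorem valuation_colon_stabilizes (V : Type*) [CommRing V]
    (hval : ∀ a b : V, a ∣ b ∨ b ∣ a)
    (a b : V)
    (ha : a ∈ Ideal.jacobson (⊥ : Ideal V)) (hb : b ∈ Ideal.jacobson (⊥ : Ideal V))
    (ha0 : a ≠ 0) (hb0 : b ≠ 0)
    (k : ℕ)
    (heq : (Ideal.span {b}).colon (Ideal.span {a ^ k})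
         = (Ideal.span {b}).colon (Ideal.span {a ^ (k + 1)}))
    (hp1 : ((Ideal.span {b}).colon (Ideal.span {a ^ k})).IsPrincipal)
    (hp2 : ((Ideal.span {b}).colon (Ideal.span {a ^ (k + 1)})).IsPrincipal) :
    b ∣ a ^ k ∨ b ∣ a ^ (k + 1) := by
  rcases hval b (a ^ (k + 1)) with h | h
  · exact Or.inr h
  -- a^(k+1) ∣ b, write b = a^(k+1) * y
  obtain ⟨y, hy⟩ := h
  obtain ⟨g, hg⟩ := hp1
  -- y lies in the colon ideal at k+1, hence (by heq) at k, hence y = g * m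
  have hymem : y ∈ (Ideal.span {b}).colon (Ideal.span {a ^ k}) := by
    rw [heq, Ideal.mem_colon_span_singleton]
    exact Ideal.mem_span_singleton.mpr ⟨1, by rw [hy]; ring⟩
  rw [hg, Ideal.submodule_span_eq, Ideal.mem_span_singleton] at hymem
  obtain ⟨m, hm⟩ := hymem
  -- g lies in the colon ideal at k, so a^k * g = b * p
  have hgmem : g ∈ (Ideal.span {b}).colon (Ideal.span {a ^ k}) := by
    rw [hg]; exact Ideal.subset_span rfl
  rw [Ideal.mem_colon_span_singleton, Ideal.mem_span_singleton] at hgmem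
  obtain ⟨p, hp⟩ := hgmem
  -- then b = a^(k+1) * y = a * (a^k * g) * m = a * b * p * m
  have key : b * (1 - a * (p * m)) = 0 := by
    have : b = a * (g * a ^ k) * m := by rw [hy, hm]; ring
    rw [hp] at this
    linear_combination this
  -- 1 - a * (p * m) is a unit since a is in the Jacobson radical
  have hunit : IsUnit (1 - a * (p * m)) := by
    have := Ideal.mem_jacobson_bot.mp ha (-(p * m))
    simpa [mul_comm, sub_eq_add_neg, mul_neg, neg_mul, add_comm] using this
  exact absurd (by
    obtain ⟨u, hu⟩ := hunit.exists_right_inv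
    calc b = b * ((1 - a * (p * m)) * u) := by rw [hu, mul_one]
    _ = b * (1 - a * (p * m)) * u := by ring
    _ = 0 := by rw [key, zero_mul]) hb0
end
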